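/- arXiv:2007.09527 — 2 statements merged into one kernel-verified Lean document; each statement's English description precedes it below -/
import Mathlib

section
/- MILP encoding completeness (backward direction, single neuron): let x : Fin n → ℝ with x ≥ 0 pointwise, and let y, q be reals with q ∈ {0,1} satisfying: (1) ∑ᵢ Wˡᵢ·xᵢ + bˡ ≤ y; (2) 0 ≤ y; (3) ∑ᵢ Wᵘᵢ·xᵢ + bᵘ + M·q ≥ y; (4) M·(1−q) ≥ y. Then there exist w : Fin n → ℝ with Wˡ ≤ w ≤ Wᵘ pointwise and b with bˡ ≤ b ≤ bᵘ such that y = σ(∑ᵢ wᵢ·xᵢ + b). -/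
/-!
If `q = 0`, constraints (1) and (3) place `y` between the pre-activations at the corners
`(Wˡ, bˡ)` and `(Wᵘ, bᵘ)` of the parameter box. The pre-activation is linear in `(w, b)`, so it
maps the segment joining the corners onto the interval between these two values, and `y ≥ 0`
makes `σ` the identity there. If `q = 1`, constraints (2) and (4) force `y = 0`, and (1) says the
lower corner already has non-positive pre-activation.
-/

open Set

theorem AffineMap.exists_mem_Icc_apply_eq {𝕜 E : Type*} [Field 𝕜] [LinearOrder 𝕜]
    [IsStrictOrderedRing 𝕜] [AddCommGroup E] [PartialOrder E] [IsOrderedAddMonoid E]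
    [Module 𝕜 E] [PosSMulMono 𝕜 E] (f : E →ᵃ[𝕜] 𝕜) {a b : E} (hab : a ≤ b) {y : 𝕜}
    (hy : y ∈ Icc (f a) (f b)) :
    ∃ p ∈ Icc a b, f p = y := by
  rw [← segment_eq_Icc (hy.1.trans hy.2), ← image_segment] at hy
  obtain ⟨p, hp, rfl⟩ := hy
  exact ⟨p, segment_subset_Icc hab hp, rfl⟩

def preactivation {ι : Type*} [Fintype ι] (x : ι → ℝ) : (ι → ℝ) × ℝ →ₗ[ℝ] ℝ where
  toFun p := ∑ i, p.1 i * x i + p.2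
  map_add' p q := by
    simp only [Prod.fst_add, Prod.snd_add, Pi.add_apply, add_mul, Finset.sum_add_distrib]
    ring
  map_smul' c p := by
    simp only [Prod.smul_fst, Prod.smul_snd, Pi.smul_apply, smul_eq_mul, RingHom.id_apply,
      mul_assoc, ← Finset.mul_sum]
    ring

@[simp]
theorem preactivation_apply {ι : Type*} [Fintype ι] (x w : ι → ℝ) (b : ℝ) :
    preactivation x (w, b) = ∑ i, w i * x i + b :=
  rfl

theorem milp_encoding_complete_general (n : ℕ) (Wl Wu x : Fin n → ℝ) (bl bu M y q : ℝ)
    (hW : ∀ i, Wl i ≤ Wu i) (hb : bl ≤ bu)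
    (hq : q = 0 ∨ q = 1)
    (h1 : ∑ i, Wl i * x i + bl ≤ y)
    (h2 : 0 ≤ y)
    (h3 : y ≤ ∑ i, Wu i * x i + bu + M * q)
    (h4 : y ≤ M * (1 - q)) :
    ∃ (w : Fin n → ℝ) (b : ℝ),
      (∀ i, Wl i ≤ w i) ∧ (∀ i, w i ≤ Wu i) ∧ bl ≤ b ∧ b ≤ bu ∧
      y = max 0 (∑ i, w i * x i + b) := by
  rcases hq with rfl | rfl
  · obtain ⟨⟨w, b⟩, ⟨⟨hWl, hbl⟩, ⟨hWu, hbu⟩⟩, hy⟩ :=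
      (preactivation x).toAffineMap.exists_mem_Icc_apply_eq (Prod.mk_le_mk.mpr ⟨hW, hb⟩)
        (y := y) ⟨by simpa using h1, by simpa using h3⟩
    simp only [LinearMap.coe_toAffineMap, preactivation_apply] at hy
    exact ⟨w, b, hWl, hWu, hbl, hbu, by rw [hy, max_eq_right (hy ▸ h2)]⟩
  · obtain rfl : y = 0 := le_antisymm (by simpa using h4) h2
    exact ⟨Wl, bl, fun _ => le_rfl, hW, le_rfl, hb, (max_eq_left h1).symm⟩

theorem milp_encoding_complete (n : ℕ) (Wl Wu x : Fin n → ℝ) (bl bu M y q : ℝ)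
    (hW : ∀ i, Wl i ≤ Wu i) (hb : bl ≤ bu)
    (hx : ∀ i, 0 ≤ x i)
    (hq : q = 0 ∨ q = 1)
    (h1 : ∑ i, Wl i * x i + bl ≤ y)
    (h2 : 0 ≤ y)
    (h3 : y ≤ ∑ i, Wu i * x i + bu + M * q)
    (h4 : y ≤ M * (1 - q)) :
    ∃ (w : Fin n → ℝ) (b : ℝ),
      (∀ i, Wl i ≤ w i) ∧ (∀ i, w i ≤ Wu i) ∧ bl ≤ b ∧ b ≤ bu ∧
      y = max 0 (∑ i, w i * x i + b) :=
  milp_encoding_complete_general n Wl Wu x bl bu M y q hW hb hq h1 h2 h3 h4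
end

section
/- Single-layer left-abstraction soundness: let S be a finite nonempty index set partitioned into nonempty blocks P₁,...,Pₘ, let v : S → ℝ be nonnegative, let w : S → ℝ be edge weights and b a bias, and set y = σ(∑_{s∈S} w(s)·v(s) + b). Define for each block Pⱼ the abstract value v̂(j) = (∑_{s∈Pⱼ} v(s))/|Pⱼ|. Then there exist abstract weights ŵ(j) with |Pⱼ|·min_{s∈Pⱼ} w(s) ≤ ŵ(j) ≤ |Pⱼ|·max_{s∈Pⱼ} w(s) for each j, such that y = σ(∑ⱼ ŵ(j)·v̂(j) + b). -/
/-!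
Split the pre-activation sum along the blocks. On a block `Pⱼ`, since `v ≥ 0`, the sum
`∑ w(s) v(s)` is `cⱼ · ∑ v(s)` for a `v`-weighted mean `cⱼ` of `w` on `Pⱼ`, which lies between the
minimum and the maximum of `w` there; `ŵ(j) = |Pⱼ| · cⱼ` then reproduces the block's contribution.
-/

open Finset

theorem Finset.exists_sum_mul_eq_mul_sum_of_nonneg {ι K : Type*} [Field K] [LinearOrder K]
    [IsStrictOrderedRing K] {t : Finset ι} (ht : t.Nonempty) (w v : ι → K)
    (hv : ∀ i ∈ t, 0 ≤ v i) :
    ∃ c ∈ Set.Icc (t.inf' ht w) (t.sup' ht w), ∑ i ∈ t, w i * v i = c * ∑ i ∈ t, v i := by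
  have hlow : t.inf' ht w * ∑ i ∈ t, v i ≤ ∑ i ∈ t, w i * v i := by
    rw [mul_sum]
    exact sum_le_sum fun i hi => mul_le_mul_of_nonneg_right (inf'_le w hi) (hv i hi)
  have hhigh : ∑ i ∈ t, w i * v i ≤ t.sup' ht w * ∑ i ∈ t, v i := by
    rw [mul_sum]
    exact sum_le_sum fun i hi => mul_le_mul_of_nonneg_right (le_sup' w hi) (hv i hi)
  rcases (sum_nonneg hv).eq_or_lt with hzero | hpos
  · have hv0 : ∀ i ∈ t, v i = 0 := (sum_eq_zero_iff_of_nonneg hv).mp hzero.symm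
    obtain ⟨i, hi⟩ := ht
    refine ⟨t.inf' ⟨i, hi⟩ w, ⟨le_rfl, (inf'_le w hi).trans (le_sup' w hi)⟩, ?_⟩
    rw [← hzero, mul_zero]
    exact sum_eq_zero fun j hj => by rw [hv0 j hj, mul_zero]
  · refine ⟨(∑ i ∈ t, w i * v i) / ∑ i ∈ t, v i,
      ⟨(le_div_iff₀ hpos).mpr hlow, (div_le_iff₀ hpos).mpr hhigh⟩, ?_⟩
    rw [div_mul_cancel₀ _ hpos.ne']

theorem Finset.sum_univ_eq_sum_sum_of_partition {ι S M : Type*} [Fintype ι] [Fintype S]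
    [AddCommMonoid M] (P : ι → Finset S) (hdisj : ∀ j j', j ≠ j' → Disjoint (P j) (P j'))
    (hcover : ∀ s, ∃ j, s ∈ P j) (f : S → M) :
    ∑ s, f s = ∑ j, ∑ s ∈ P j, f s := by
  classical
  have hunion : univ.biUnion P = univ := eq_univ_of_forall fun s => by simpa using hcover s
  rw [← sum_biUnion fun j _ j' _ => hdisj j j', hunion]

theorem left_abstraction_sound (S : Type*) [Fintype S] (m : ℕ)
    (P : Fin m → Finset S)
    (hPne : ∀ j, (P j).Nonempty)
    (hdisj : ∀ j j', j ≠ j' → Disjoint (P j) (P j'))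
    (hcover : ∀ s : S, ∃ j, s ∈ P j)
    (v w : S → ℝ) (b : ℝ) (hv : ∀ s, 0 ≤ v s) :
    ∃ wa : Fin m → ℝ,
      (∀ j, ((P j).card : ℝ) * (P j).inf' (hPne j) w ≤ wa j ∧
            wa j ≤ ((P j).card : ℝ) * (P j).sup' (hPne j) w) ∧
      max 0 (∑ s, w s * v s + b)
        = max 0 (∑ j, wa j * ((∑ s ∈ P j, v s) / (P j).card) + b) := by
  choose c hc hsum using fun j =>
    (P j).exists_sum_mul_eq_mul_sum_of_nonneg (hPne j) w v fun s _ => hv s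
  have hcard : ∀ j, ((P j).card : ℝ) ≠ 0 := fun j => by
    exact_mod_cast (card_pos.mpr (hPne j)).ne'
  refine ⟨fun j => (P j).card * c j, fun j => ?_, ?_⟩
  · have hcard_nonneg : (0 : ℝ) ≤ (P j).card := Nat.cast_nonneg _
    exact ⟨mul_le_mul_of_nonneg_left (hc j).1 hcard_nonneg,
      mul_le_mul_of_nonneg_left (hc j).2 hcard_nonneg⟩
  · rw [sum_univ_eq_sum_sum_of_partition P hdisj hcover]
    congr 2
    refine sum_congr rfl fun j _ => ?_
    rw [hsum j]
    field_simp [hcard j]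
end
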